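/- arXiv:1710.00124 — 5 statements merged into one kernel-verified Lean document; each statement's English description precedes it below -/
import Mathlib

section
/- For any prime p and any integers 0 ≤ ℓ ≤ k, there exists a real number θ with 0 ≤ θ < 6 such that the Gaussian binomial coefficient [k choose ℓ]_p equals p^(ℓ(k-ℓ)) · (1 + θ/p). -/
/-!
Put `x = 1/p`. The `j`-th factor equals `p^(k-ℓ) (1 - x^(k-ℓ+j)) / (1 - x^j)`, so the
coefficient is `p^(ℓ(k-ℓ)) R` with `1 ≤ R ≤ ∏_{j ≤ ℓ} (1 - x^j)⁻¹`, and `θ = p (R - 1)`.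
Keeping the factors `j = 1, 2` and bounding the rest by the Weierstrass inequality
`1 - ∑ fᵢ ≤ ∏ (1 - fᵢ)` and a geometric series gives
`∏_{j ≤ ℓ} (1 - x^j) ≥ (1 - x)(1 - x²)(1 - x³/(1 - x)) = (1 - x²)(1 - x - x³)`,
whose reciprocal is `< 1 + 6x` as soon as `x ≤ 1/2`.
-/

open Finset

theorem Finset.one_sub_sum_le_prod_one_sub {ι R : Type*} [CommRing R] [LinearOrder R]
    [IsStrictOrderedRing R] (s : Finset ι) {f : ι → R} (h0 : ∀ i ∈ s, 0 ≤ f i)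
    (h1 : ∀ i ∈ s, f i ≤ 1) :
    1 - ∑ i ∈ s, f i ≤ ∏ i ∈ s, (1 - f i) := by
  induction s using Finset.cons_induction with
  | empty => simp
  | cons a s ha ih =>
    simp only [forall_mem_cons] at h0 h1
    rw [sum_cons, prod_cons]
    have hs : 0 ≤ ∑ i ∈ s, f i := sum_nonneg h0.2
    nlinarith [mul_le_mul_of_nonneg_left (ih h0.2 h1.2) (sub_nonneg.2 h1.1)]

section Field

variable {K : Type*} [Field K]

theorem pow_add_sub_one_div_pow_sub_one {q : K} (hq : q ≠ 0) (m j : ℕ) :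
    (q ^ (m + j) - 1) / (q ^ j - 1) = q ^ m * ((1 - q⁻¹ ^ (m + j)) / (1 - q⁻¹ ^ j)) := by
  have one_sub_inv_pow : ∀ n, 1 - q⁻¹ ^ n = (q ^ n - 1) * q⁻¹ ^ n := fun n => by
    rw [sub_mul, ← mul_pow, mul_inv_cancel₀ hq, one_pow, one_mul]
  rw [one_sub_inv_pow, one_sub_inv_pow, mul_div_mul_comm, pow_add q⁻¹,
    mul_div_cancel_right₀ _ (pow_ne_zero _ (inv_ne_zero hq)), mul_left_comm, ← mul_pow,
    mul_inv_cancel₀ hq, one_pow, mul_one]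

theorem prod_pow_add_sub_one_div_pow_sub_one {q : K} (hq : q ≠ 0) (m ℓ : ℕ) :
    ∏ j ∈ Icc 1 ℓ, (q ^ (m + j) - 1) / (q ^ j - 1) =
      q ^ (ℓ * m) * ∏ j ∈ Icc 1 ℓ, (1 - q⁻¹ ^ (m + j)) / (1 - q⁻¹ ^ j) := by
  simp_rw [pow_add_sub_one_div_pow_sub_one hq, prod_mul_distrib, prod_const, Nat.card_Icc,
    Nat.add_sub_cancel, pow_mul']

end Field

section Ordered

variable {K : Type*} [Field K] [LinearOrder K] [IsStrictOrderedRing K] {x : K}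

theorem one_le_prod_one_sub_pow_add_div (hx0 : 0 ≤ x) (hx1 : x < 1) (m ℓ : ℕ) :
    1 ≤ ∏ j ∈ Icc 1 ℓ, (1 - x ^ (m + j)) / (1 - x ^ j) := by
  refine one_le_prod fun j hj => ?_
  have hden : 0 < 1 - x ^ j := sub_pos.2 (pow_lt_one₀ hx0 hx1 (by grind))
  rw [one_le_div hden]
  exact sub_le_sub_left (pow_le_pow_of_le_one hx0 hx1.le (Nat.le_add_left j m)) 1

theorem prod_one_sub_pow_add_div_le (hx0 : 0 ≤ x) (hx1 : x < 1) (m ℓ : ℕ) :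
    ∏ j ∈ Icc 1 ℓ, (1 - x ^ (m + j)) / (1 - x ^ j) ≤
      (∏ j ∈ Icc 1 ℓ, (1 - x ^ j))⁻¹ := by
  rw [← prod_inv_distrib]
  refine prod_le_prod (fun j _ => div_nonneg (sub_nonneg.2 (pow_le_one₀ hx0 hx1.le))
    (sub_nonneg.2 (pow_le_one₀ hx0 hx1.le))) fun j _ => ?_
  rw [div_eq_mul_inv]
  exact mul_le_of_le_one_left (inv_nonneg.2 (sub_nonneg.2 (pow_le_one₀ hx0 hx1.le)))
    (sub_le_self _ (pow_nonneg hx0 _))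

theorem mul_le_prod_Icc_one_sub_pow (hx0 : 0 ≤ x) (hx1 : x < 1) (n : ℕ) :
    (1 - x ^ 2) * (1 - x - x ^ 3) ≤ ∏ j ∈ Icc 1 n, (1 - x ^ j) := by
  have hf0 : ∀ j, 0 ≤ 1 - x ^ j := fun j => sub_nonneg.2 (pow_le_one₀ hx0 hx1.le)
  have htail : 1 - x ^ 3 / (1 - x) ≤ ∏ j ∈ Ico 3 (n + 3), (1 - x ^ j) :=
    (sub_le_sub_left (geom_sum_Ico_le_of_lt_one hx0 hx1) 1).trans
      (one_sub_sum_le_prod_one_sub _ (fun j _ => pow_nonneg hx0 j)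
        fun j _ => pow_le_one₀ hx0 hx1.le)
  have hsplit : ∏ j ∈ Icc 1 (n + 2), (1 - x ^ j) =
      (1 - x) * (1 - x ^ 2) * ∏ j ∈ Ico 3 (n + 3), (1 - x ^ j) := by
    rw [← Ico_add_one_right_eq_Icc, ← prod_Ico_consecutive _ (by omega : 1 ≤ 3) (by omega),
      show Ico 1 3 = {1, 2} by decide, prod_pair (by norm_num), pow_one]
    rfl
  calc (1 - x ^ 2) * (1 - x - x ^ 3)
      = (1 - x) * (1 - x ^ 2) * (1 - x ^ 3 / (1 - x)) := by
        field_simp [(sub_pos.2 hx1).ne']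
    _ ≤ ∏ j ∈ Icc 1 (n + 2), (1 - x ^ j) := by
        rw [hsplit]
        exact mul_le_mul_of_nonneg_left htail (mul_nonneg (sub_nonneg.2 hx1.le) (hf0 2))
    _ ≤ ∏ j ∈ Icc 1 n, (1 - x ^ j) :=
        prod_le_prod_of_subset_of_le_one (Icc_subset_Icc_right (by omega)) (fun j _ => hf0 j)
          fun j _ _ => sub_le_self _ (pow_nonneg hx0 j)

theorem one_lt_mul_one_add_six_mul (hx0 : 0 < x) (hx : x ≤ 1 / 2) :
    1 < (1 - x ^ 2) * (1 - x - x ^ 3) * (1 + 6 * x) := by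
  -- the excess over `1` is `x ((1 - 2x)(5 + 3x) + x⁴ + 6x⁵)`
  have h : 0 ≤ (1 - 2 * x) * (5 + 3 * x) := mul_nonneg (by linarith) (by linarith)
  nlinarith [pow_pos hx0 5, pow_pos hx0 6]

theorem prod_one_sub_pow_add_div_lt (hx0 : 0 < x) (hx : x ≤ 1 / 2) (m ℓ : ℕ) :
    ∏ j ∈ Icc 1 ℓ, (1 - x ^ (m + j)) / (1 - x ^ j) < 1 + 6 * x := by
  have hx1 : x < 1 := by linarith
  have hc := one_lt_mul_one_add_six_mul hx0 hx
  have hc0 : 0 < (1 - x ^ 2) * (1 - x - x ^ 3) :=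
    pos_of_mul_pos_left (by linarith) (by linarith : (0 : K) ≤ 1 + 6 * x)
  calc _ ≤ (∏ j ∈ Icc 1 ℓ, (1 - x ^ j))⁻¹ := prod_one_sub_pow_add_div_le hx0.le hx1 m ℓ
    _ ≤ ((1 - x ^ 2) * (1 - x - x ^ 3))⁻¹ :=
        inv_anti₀ hc0 (mul_le_prod_Icc_one_sub_pow hx0.le hx1 ℓ)
    _ < 1 + 6 * x := (inv_lt_iff_one_lt_mul₀' hc0).2 hc

end Ordered

theorem gaussian_binomial_estimate_general (p k ℓ : ℕ) (hp : p.Prime) :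
    ∃ θ : ℝ, 0 ≤ θ ∧ θ < 6 ∧
      ∏ j ∈ Finset.Icc 1 ℓ, ((p : ℝ) ^ (k - ℓ + j) - 1) / ((p : ℝ) ^ j - 1)
        = (p : ℝ) ^ (ℓ * (k - ℓ)) * (1 + θ / p) := by
  have hp0 : (0 : ℝ) < p := by exact_mod_cast hp.pos
  have hx : (p : ℝ)⁻¹ ≤ 1 / 2 := by
    rw [one_div]; exact inv_anti₀ two_pos (by exact_mod_cast hp.two_le)
  set R := ∏ j ∈ Icc 1 ℓ, (1 - (p : ℝ)⁻¹ ^ (k - ℓ + j)) / (1 - (p : ℝ)⁻¹ ^ j)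
  have hR1 : 1 ≤ R := one_le_prod_one_sub_pow_add_div (by positivity) (by linarith) _ _
  have hR6 : R < 1 + 6 * (p : ℝ)⁻¹ := prod_one_sub_pow_add_div_lt (by positivity) hx _ _
  refine ⟨p * (R - 1), mul_nonneg hp0.le (sub_nonneg.2 hR1), ?_, ?_⟩
  · calc (p : ℝ) * (R - 1) < p * (6 * (p : ℝ)⁻¹) := by gcongr; linarith
      _ = 6 := by field_simp
  · rw [prod_pow_add_sub_one_div_pow_sub_one hp0.ne', mul_div_cancel_left₀ _ hp0.ne',
      add_sub_cancel]

/-- For any prime `p` and integers `0 ≤ ℓ ≤ k`, there exists `0 ≤ θ < 6` with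
`[k choose ℓ]_p = p^(ℓ(k-ℓ)) (1 + θ/p)`, where the Gaussian binomial coefficient is
`∏_{j=1}^{ℓ} (p^(k-ℓ+j) - 1)/(p^j - 1)`. -/
theorem gaussian_binomial_estimate (p k ℓ : ℕ) (hp : p.Prime) (hℓk : ℓ ≤ k) :
    ∃ θ : ℝ, 0 ≤ θ ∧ θ < 6 ∧
      ∏ j ∈ Finset.Icc 1 ℓ, ((p : ℝ) ^ (k - ℓ + j) - 1) / ((p : ℝ) ^ j - 1)
        = (p : ℝ) ^ (ℓ * (k - ℓ)) * (1 + θ / p) :=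
  gaussian_binomial_estimate_general p k ℓ hp
end

section
/- For any x ≥ 3 and any positive integer m ≤ x, the sum over primes p dividing m of 1/(log p) is at most (log x)/(log log x)² + O((log x)/(log log x)³). -/
/-!
Put `T = log x` and `L = log T`. For a prime `p`, write `1 / log p = log p / L² + c(p)` with
`c(p) = 1 / log p - log p / L²`. The main terms sum to at most `log m / L² ≤ T / L²` over the
prime factors of `m`, and `c(p) ≥ 0` exactly when `p ≤ T`, so the error is at most the sum of
`c(p)` over all primes `p ≤ T`. Primes `p ≤ √T` contribute `O(√T) = O(T / L³)`.
For `√T < p ≤ T` one has `c(p) ≤ 8 log p · log (T / p) / L³`, and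
`∑_{p ≤ T} log p · log (T / p) ≤ 2T`: counting `log (T / p)` dyadically rewrites the sum as
`∑_k θ(T / 2^k)`, and Chebyshev's bound `θ(y) ≤ y log 4` sums to `O(T)`.
-/

open Finset Real Chebyshev

theorem one_div_le_div_sq {a u : ℝ} (ha : 0 < a) (hau : a ≤ u) : 1 / u ≤ u / a ^ 2 := by
  rw [div_le_div_iff₀ (by linarith) (by positivity)]
  nlinarith

theorem one_div_sub_div_sq_le {u L : ℝ} (hLu : L / 2 ≤ u) (huL : u ≤ L) (hL : 0 < L) :
    1 / u - u / L ^ 2 ≤ 8 / L ^ 3 * (u * (L - u)) := by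
  have hu : 0 < u := by linarith
  have hfactor : 1 / u - u / L ^ 2 = (L - u) * (L + u) / (u * L ^ 2) := by field_simp; ring
  rw [hfactor, div_le_iff₀ (by positivity)]
  have hquad : L * (L + u) ≤ 8 * u ^ 2 := by nlinarith
  calc (L - u) * (L + u) = (L - u) * (L * (L + u)) / L := by field_simp
    _ ≤ (L - u) * (8 * u ^ 2) / L := by gcongr
    _ = 8 / L ^ 3 * (u * (L - u)) * (u * L ^ 2) := by field_simp

theorem sqrt_mul_log_pow_three_le {T : ℝ} (hT : 1 ≤ T) : √T * log T ^ 3 ≤ 48 * T := by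
  set L := log T
  have hL : 0 ≤ L := log_nonneg hT
  have hexp : L ^ 3 / 48 ≤ exp (L / 2) := by
    have := pow_div_factorial_le_exp (L / 2) (by positivity) 3
    norm_num [Nat.factorial] at this
    linarith
  have hsqrt : √T = exp (L / 2) := by rw [exp_half, exp_log (by linarith)]
  have hT_eq : T = exp (L / 2) * exp (L / 2) := by
    rw [← exp_add, add_halves, exp_log (by linarith)]
  rw [hsqrt, hT_eq]
  nlinarith [exp_pos (L / 2)]

theorem log_le_log_two_mul_card_pow_le {r : ℝ} (hr : 1 ≤ r) {N : ℕ} (hN : r < 2 ^ N) :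
    log r ≤ log 2 * #{k ∈ range N | (2 : ℝ) ^ k ≤ r} := by
  set j := Nat.log 2 ⌊r⌋₊
  have hfloor : ⌊r⌋₊ ≠ 0 := (Nat.floor_pos.mpr hr).ne'
  have hpow_le : (2 : ℝ) ^ j ≤ r := calc
    (2 : ℝ) ^ j ≤ ⌊r⌋₊ := by exact_mod_cast Nat.pow_log_le_self 2 hfloor
    _ ≤ r := Nat.floor_le (by linarith)
  have hlt_pow : r < 2 ^ (j + 1) :=
    (Nat.lt_floor_add_one r).trans_le (by exact_mod_cast Nat.lt_pow_succ_log_self one_lt_two _)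
  have hcard : j + 1 ≤ #{k ∈ range N | (2 : ℝ) ^ k ≤ r} := by
    rw [← card_range (j + 1)]
    refine card_le_card fun k hk => ?_
    have hkr : (2 : ℝ) ^ k ≤ r :=
      (pow_le_pow_right₀ one_le_two (Nat.lt_succ_iff.mp (mem_range.mp hk))).trans hpow_le
    have hkN : k < N := (pow_lt_pow_iff_right₀ one_lt_two).mp (hkr.trans_lt hN)
    exact mem_filter.mpr ⟨mem_range.mpr hkN, hkr⟩
  calc log r ≤ log (2 ^ (j + 1)) := log_le_log (by linarith) hlt_pow.le
    _ = log 2 * (j + 1 : ℕ) := by rw [log_pow, mul_comm]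
    _ ≤ log 2 * #{k ∈ range N | (2 : ℝ) ^ k ≤ r} := by gcongr

theorem sum_log_primeFactors_le_log (m : ℕ) : ∑ p ∈ m.primeFactors, log p ≤ log m := by
  rw [← ArithmeticFunction.vonMangoldt_sum]
  calc ∑ p ∈ m.primeFactors, log p
      = ∑ p ∈ m.primeFactors, ArithmeticFunction.vonMangoldt p :=
        sum_congr rfl fun p hp =>
          (ArithmeticFunction.vonMangoldt_apply_prime (Nat.prime_of_mem_primeFactors hp)).symm
    _ ≤ ∑ d ∈ m.divisors, ArithmeticFunction.vonMangoldt d :=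
        sum_le_sum_of_subset_of_nonneg
          (m.primeFactors_eq_to_filter_divisors_prime ▸ filter_subset _ _) fun _ _ _ =>
          ArithmeticFunction.vonMangoldt_nonneg

theorem sum_primesLE_one_div_log_le {y : ℝ} (hy : 0 ≤ y) :
    ∑ p ∈ Nat.primesLE ⌊y⌋₊, 1 / log p ≤ 3 * y := by
  have hlog2 : 0 < log 2 := log_pos one_lt_two
  calc ∑ p ∈ Nat.primesLE ⌊y⌋₊, 1 / log p
      ≤ ∑ p ∈ Nat.primesLE ⌊y⌋₊, log p / log 2 ^ 2 := by
        refine sum_le_sum fun p hp => one_div_le_div_sq hlog2 (log_le_log two_pos ?_)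
        exact_mod_cast Nat.two_le_of_mem_primesLE hp
    _ = θ y / log 2 ^ 2 := by rw [theta_eq_sum_primesLE, sum_div]
    _ ≤ log 4 * y / log 2 ^ 2 := by gcongr; exact theta_le_log4_mul_x hy
    _ = 2 / log 2 * y := by rw [log_four_eq]; field_simp
    _ ≤ 3 * y := by
        gcongr
        rw [div_le_iff₀ hlog2]
        linarith [log_two_gt_d9]

theorem sum_primesLE_log_mul_log_div_le {T : ℝ} (hT : 0 ≤ T) :
    ∑ p ∈ Nat.primesLE ⌊T⌋₊, log p * log (T / p) ≤ 2 * T := by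
  set N := ⌊T⌋₊ + 1
  have hTN : T < 2 ^ N := (Nat.lt_floor_add_one T).trans (by exact_mod_cast Nat.lt_two_pow_self)
  have hdyadic : ∀ p ∈ Nat.primesLE ⌊T⌋₊,
      log p * log (T / p) ≤ log 2 * (log p * #{k ∈ range N | (2 : ℝ) ^ k ≤ T / p}) := by
    intro p hp
    have hp1 : (1 : ℝ) ≤ p := by exact_mod_cast (Nat.prime_of_mem_primesLE hp).one_le
    have hpT : (p : ℝ) ≤ T := (Nat.le_floor_iff hT).mp (Nat.le_of_mem_primesLE hp)
    have hr : 1 ≤ T / p := (one_le_div₀ (by linarith)).mpr hpT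
    have hrN : T / p < 2 ^ N := (div_le_self hT hp1).trans_lt hTN
    calc log p * log (T / p) ≤ log p * (log 2 * #{k ∈ range N | (2 : ℝ) ^ k ≤ T / p}) := by
          gcongr
          exact log_le_log_two_mul_card_pow_le hr hrN
      _ = _ := by ring
  -- Swapping the two sums turns the dyadic counts into `∑ k < N, θ (T / 2 ^ k)`.
  have hswap : ∑ p ∈ Nat.primesLE ⌊T⌋₊, log p * #{k ∈ range N | (2 : ℝ) ^ k ≤ T / p}
      = ∑ k ∈ range N,
          ∑ p ∈ Nat.primesLE ⌊T⌋₊ with (2 : ℝ) ^ k ≤ T / (p : ℕ), log p := by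
    simp only [card_filter, Nat.cast_sum, mul_sum, sum_filter]
    rw [sum_comm]
    simp
  have htheta : ∀ k, ∑ p ∈ Nat.primesLE ⌊T⌋₊ with (2 : ℝ) ^ k ≤ T / (p : ℕ), log p
      ≤ log 4 * T * (1 / 2) ^ k := by
    intro k
    calc ∑ p ∈ Nat.primesLE ⌊T⌋₊ with (2 : ℝ) ^ k ≤ T / (p : ℕ), log p
        ≤ θ (T / 2 ^ k) := by
          rw [theta_eq_sum_primesLE]
          refine sum_le_sum_of_subset_of_nonneg (fun p hp => ?_) fun p _ _ => log_natCast_nonneg p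
          obtain ⟨hp, hkp⟩ := mem_filter.mp hp
          have hp0 : (0 : ℝ) < p := by exact_mod_cast (Nat.prime_of_mem_primesLE hp).pos
          refine Nat.mem_primesLE.mpr ⟨Nat.le_floor ?_, Nat.prime_of_mem_primesLE hp⟩
          rw [le_div_iff₀ hp0] at hkp
          rw [le_div_iff₀ (by positivity)]
          linarith
      _ ≤ log 4 * (T / 2 ^ k) := theta_le_log4_mul_x (by positivity)
      _ = log 4 * T * (1 / 2) ^ k := by rw [one_div_pow]; ring
  calc ∑ p ∈ Nat.primesLE ⌊T⌋₊, log p * log (T / p)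
      ≤ log 2 * ∑ k ∈ range N,
          ∑ p ∈ Nat.primesLE ⌊T⌋₊ with (2 : ℝ) ^ k ≤ T / (p : ℕ), log p := by
        rw [← hswap, mul_sum]
        exact sum_le_sum hdyadic
    _ ≤ log 2 * ∑ k ∈ range N, log 4 * T * (1 / 2) ^ k := by
        gcongr with k
        exact htheta k
    _ ≤ log 2 * (log 4 * T * 2) := by
        rw [← mul_sum]
        gcongr
        exact sum_geometric_two_le N
    _ ≤ 2 * T := by
        have hsq : log 2 * log 2 ≤ 1 / 2 := by nlinarith [log_pos one_lt_two, log_two_lt_d9]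
        rw [log_four_eq]
        nlinarith [mul_le_mul_of_nonneg_right hsq hT]

theorem sum_primesLE_one_div_log_sub_le {T : ℝ} (hT : 1 < T) :
    ∑ p ∈ Nat.primesLE ⌊T⌋₊, (1 / log p - log p / log T ^ 2)
      ≤ 3 * √T + 16 * (T / log T ^ 3) := by
  set L := log T
  have hL : 0 < L := log_pos hT
  set P := Nat.primesLE ⌊T⌋₊
  have hpT : ∀ p ∈ P, (p : ℝ) ≤ T := fun p hp =>
    (Nat.le_floor_iff (by linarith)).mp (Nat.le_of_mem_primesLE hp)
  have hsmall :
      ∑ p ∈ P with ((p : ℕ) : ℝ) ≤ √T, (1 / log p - log p / L ^ 2) ≤ 3 * √T := by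
    calc ∑ p ∈ P with ((p : ℕ) : ℝ) ≤ √T, (1 / log p - log p / L ^ 2)
        ≤ ∑ p ∈ P with ((p : ℕ) : ℝ) ≤ √T, 1 / log p :=
          sum_le_sum fun p _ => sub_le_self _ (by positivity)
      _ ≤ ∑ p ∈ Nat.primesLE ⌊√T⌋₊, 1 / log p := by
          refine sum_le_sum_of_subset_of_nonneg (fun p hp => ?_) fun p _ _ => by positivity
          obtain ⟨hpP, hp⟩ := mem_filter.mp hp
          exact Nat.mem_primesLE.mpr ⟨Nat.le_floor hp, Nat.prime_of_mem_primesLE hpP⟩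
      _ ≤ 3 * √T := sum_primesLE_one_div_log_le (sqrt_nonneg T)
  have hlarge : ∑ p ∈ P with ¬ ((p : ℕ) : ℝ) ≤ √T, (1 / log p - log p / L ^ 2)
      ≤ 16 * (T / L ^ 3) := by
    have hterm : ∀ p ∈ {p ∈ P | ¬ ((p : ℕ) : ℝ) ≤ √T},
        1 / log p - log p / L ^ 2 ≤ 8 / L ^ 3 * (log p * log (T / p)) := by
      intro p hp
      obtain ⟨hpP, hp⟩ := mem_filter.mp hp
      have hp0 : (0 : ℝ) < p := by exact_mod_cast (Nat.prime_of_mem_primesLE hpP).pos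
      have hhalf : L / 2 ≤ log p := by
        rw [← log_sqrt (by linarith)]
        exact log_le_log (by positivity) (not_le.mp hp).le
      rw [log_div (by linarith) hp0.ne']
      exact one_div_sub_div_sq_le hhalf (log_le_log hp0 (hpT p hpP)) hL
    calc ∑ p ∈ P with ¬ ((p : ℕ) : ℝ) ≤ √T, (1 / log p - log p / L ^ 2)
        ≤ ∑ p ∈ P with ¬ ((p : ℕ) : ℝ) ≤ √T, 8 / L ^ 3 * (log p * log (T / p)) :=
          sum_le_sum hterm
      _ ≤ ∑ p ∈ P, 8 / L ^ 3 * (log p * log (T / p)) := by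
          refine sum_le_sum_of_subset_of_nonneg (filter_subset _ _) fun p hp _ => ?_
          have hp1 : (1 : ℝ) ≤ p := by exact_mod_cast (Nat.prime_of_mem_primesLE hp).one_le
          have : 0 ≤ log (T / p) := log_nonneg ((one_le_div₀ (by linarith)).mpr (hpT p hp))
          positivity
      _ ≤ 8 / L ^ 3 * (2 * T) := by
          rw [← mul_sum]
          gcongr
          exact sum_primesLE_log_mul_log_div_le (by linarith)
      _ = 16 * (T / L ^ 3) := by ring
  rw [← sum_filter_add_sum_filter_not P (fun p : ℕ => (p : ℝ) ≤ √T)]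
  exact add_le_add hsmall hlarge

theorem sum_one_div_log_le_of_forall_prime {S : Finset ℕ} (hS : ∀ p ∈ S, p.Prime) {T : ℝ}
    (hT : 1 < T) :
    ∑ p ∈ S, 1 / log p ≤ (∑ p ∈ S, log p) / log T ^ 2
      + ∑ p ∈ Nat.primesLE ⌊T⌋₊, (1 / log p - log p / log T ^ 2) := by
  set L := log T
  have hL : 0 < L := log_pos hT
  have hlog_pos : ∀ p : ℕ, p.Prime → 0 < log p := fun p hp =>
    log_pos (by exact_mod_cast hp.one_lt)
  have hsmall : ∀ p : ℕ, p.Prime → (p : ℝ) ≤ T → 0 ≤ 1 / log p - log p / L ^ 2 := by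
    intro p hp hpT
    have hpL : log p ≤ L := log_le_log (by exact_mod_cast hp.pos) hpT
    rw [sub_nonneg, div_le_div_iff₀ (by positivity) (hlog_pos p hp)]
    nlinarith [hlog_pos p hp]
  have hlarge :
      ∀ p : ℕ, p.Prime → ¬ (p : ℝ) ≤ T → 1 / log p - log p / L ^ 2 ≤ 0 := by
    intro p hp hpT
    have hpL : L ≤ log p := log_le_log (by linarith) (not_le.mp hpT).le
    linarith [one_div_le_div_sq hL hpL]
  have hsubset : {p ∈ S | ((p : ℕ) : ℝ) ≤ T} ⊆ Nat.primesLE ⌊T⌋₊ := fun p hp => by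
    obtain ⟨hpS, hpT⟩ := mem_filter.mp hp
    exact Nat.mem_primesLE.mpr ⟨Nat.le_floor hpT, hS p hpS⟩
  calc ∑ p ∈ S, 1 / log p
      = ∑ p ∈ S, log p / L ^ 2 + ∑ p ∈ S, (1 / log p - log p / L ^ 2) := by
        rw [← sum_add_distrib]
        exact sum_congr rfl fun p _ => by ring
    _ ≤ ∑ p ∈ S, log p / L ^ 2
          + ∑ p ∈ {p ∈ S | ((p : ℕ) : ℝ) ≤ T}, (1 / log p - log p / L ^ 2) := by
        have hsplit := sum_filter_add_sum_filter_not S (fun p : ℕ => (p : ℝ) ≤ T)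
          fun p => 1 / log p - log p / L ^ 2
        have hneg := sum_nonpos fun p hp =>
          hlarge p (hS p (mem_filter.mp hp).1) (mem_filter.mp hp).2
        linarith
    _ ≤ _ := by
        rw [sum_div]
        refine add_le_add_right (sum_le_sum_of_subset_of_nonneg hsubset fun p hp _ => ?_) _
        exact hsmall p (Nat.prime_of_mem_primesLE hp) ((Nat.le_floor_iff (by linarith)).mp
          (Nat.le_of_mem_primesLE hp))

/-- There is an absolute constant `C` such that for all `x ≥ 3` and positive integers
`m ≤ x`, `∑_{p ∣ m} 1/log p ≤ (log x)/(log log x)² + C·(log x)/(log log x)³`. -/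
theorem sum_inv_log_primeFactors :
    ∃ C : ℝ, 0 < C ∧ ∀ (x : ℝ) (m : ℕ), 3 ≤ x → 0 < m → (m : ℝ) ≤ x →
      ∑ p ∈ m.primeFactors, 1 / Real.log p
        ≤ Real.log x / (Real.log (Real.log x)) ^ 2
            + C * (Real.log x / (Real.log (Real.log x)) ^ 3) := by
  refine ⟨160, by norm_num, fun x m hx hm hmx => ?_⟩
  set T := log x
  have hT : 1 < T := by
    rw [lt_log_iff_exp_lt (by linarith)]
    linarith [exp_one_lt_d9]
  have hL : 0 < log T := log_pos hT
  have hlog_m : ∑ p ∈ m.primeFactors, log p ≤ T :=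
    (sum_log_primeFactors_le_log m).trans (log_le_log (by exact_mod_cast hm) hmx)
  have hsqrt : √T ≤ 48 * (T / log T ^ 3) := by
    rw [mul_div_assoc', le_div_iff₀ (by positivity)]
    exact sqrt_mul_log_pow_three_le hT.le
  calc ∑ p ∈ m.primeFactors, 1 / log p
      ≤ (∑ p ∈ m.primeFactors, log p) / log T ^ 2
        + ∑ p ∈ Nat.primesLE ⌊T⌋₊, (1 / log p - log p / log T ^ 2) :=
        sum_one_div_log_le_of_forall_prime (fun _ => Nat.prime_of_mem_primeFactors) hT
    _ ≤ T / log T ^ 2 + (3 * √T + 16 * (T / log T ^ 3)) := by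
        gcongr
        exact sum_primesLE_one_div_log_sub_le hT
    _ ≤ T / log T ^ 2 + 160 * (T / log T ^ 3) := by linarith
end

section
/- For any positive integer n, log I(n) satisfies ω(φ(n))·log 2 ≤ log I(n) ≤ Ω(φ(n))·log 2, where I(n) is the number of isomorphism classes of subgroups of (ℤ/nℤ)ˣ. -/
/-!
Let `G` be a finite abelian group (here `(ℤ/nℤ)ˣ`, of order `φ(n)`).

Lower bound: for every set `S` of primes dividing `|G|`, the kernel of `x ↦ x ^ ∏ S` has order
whose prime factors are exactly `S` (Cauchy's theorem), so these `2 ^ ω(|G|)` subgroups are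
pairwise non-isomorphic.

Upper bound: by the structure theorem, every subgroup of `G` is a product of cyclic groups
`ℤ/p^k`, and for each prime `p` the exponents `k` form a partition of a number at most
`v_p(|G|)`. A partition of a number at most `v` is encoded by a subset of `{1, …, v}`, so the
isomorphism classes of subgroups inject into a set of size `∏_p 2 ^ v_p(|G|) = 2 ^ Ω(|G|)`.
-/

open Finset

/-- A set `s = {x₁ < ⋯ < xᵣ}` encodes the partition with parts `xᵢ - (i - 1)`. -/
def partOf (s : Finset ℕ) (x : ℕ) : ℕ := x - #{y ∈ s | y < x}

def partsOf (s : Finset ℕ) : Multiset ℕ := s.val.map (partOf s)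

theorem partsOf_insert {s : Finset ℕ} {x : ℕ} (hx : ∀ y ∈ s, y < x) :
    partsOf (insert x s) = (x - #s) ::ₘ partsOf s := by
  have hxs : x ∉ s := fun h => (hx x h).false
  have hpart : ∀ y ∈ s, partOf (insert x s) y = partOf s y := fun y hy => by
    rw [partOf, partOf, filter_insert, if_neg (hx y hy).not_gt]
  rw [partsOf, insert_val_of_notMem hxs, Multiset.map_cons, partOf, filter_insert,
    if_neg (lt_irrefl x), filter_true_of_mem hx, partsOf, Multiset.map_congr rfl hpart]

theorem exists_partsOf_eq_and_lt_sup_add_card (E : Multiset ℕ) (hE : ∀ x ∈ E, 0 < x) :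
    ∃ s : Finset ℕ, partsOf s = E ∧ ∀ x ∈ s, 0 < x ∧ x < E.sup + Multiset.card E := by
  induction E using Multiset.strongInductionOn with
  | ih E ih =>
    rcases eq_or_ne E 0 with rfl | hne
    · exact ⟨∅, rfl, by simp⟩
    obtain ⟨M, hM, hMmax⟩ := E.exists_max_image id hne
    obtain ⟨s, hs, hsbound⟩ := ih (E.erase M) (Multiset.erase_lt.2 hM)
      fun x hx => hE x (Multiset.mem_of_mem_erase hx)
    have hsup : (E.erase M).sup ≤ M := Multiset.sup_le.2 fun x hx =>
      hMmax x (Multiset.mem_of_mem_erase hx)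
    have hcard : #s = Multiset.card (E.erase M) := by
      rw [← hs, partsOf, Multiset.card_map, card_val]
    have hEsup : E.sup = M := le_antisymm (Multiset.sup_le.2 hMmax) (Multiset.le_sup hM)
    have hEcard : Multiset.card E = Multiset.card (E.erase M) + 1 :=
      (Multiset.card_erase_add_one hM).symm
    have hlt : ∀ y ∈ s, y < M + #s := fun y hy => by
      have := (hsbound y hy).2; omega
    refine ⟨insert (M + #s) s, ?_, ?_⟩
    · rw [partsOf_insert hlt, Nat.add_sub_cancel, hs, Multiset.cons_erase hM]
    · intro x hx
      rcases mem_insert.1 hx with rfl | hx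
      · have := hE M hM; omega
      · have := hsbound x hx; omega

theorem Multiset.sup_add_card_le_sum_add_one (E : Multiset ℕ) (hE : ∀ x ∈ E, 0 < x) :
    E.sup + Multiset.card E ≤ E.sum + 1 := by
  induction E using Multiset.induction_on with
  | empty => simp
  | cons a E ih =>
    have ha := hE a (Multiset.mem_cons_self a E)
    have hE' : ∀ x ∈ E, 0 < x := fun x hx => hE x (Multiset.mem_cons_of_mem hx)
    have hcard : Multiset.card E ≤ E.sum := by
      simpa using Multiset.card_nsmul_le_sum hE'
    have := ih hE'
    simp only [Multiset.sup_cons, Multiset.card_cons, Multiset.sum_cons]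
    omega

theorem exists_subset_Icc_partsOf_eq (E : Multiset ℕ) (hE : ∀ x ∈ E, 0 < x) :
    ∃ s ⊆ Icc 1 E.sum, partsOf s = E := by
  obtain ⟨s, hs, hbound⟩ := exists_partsOf_eq_and_lt_sup_add_card E hE
  have := Multiset.sup_add_card_le_sum_add_one E hE
  exact ⟨s, fun x hx => mem_Icc.2 ⟨(hbound x hx).1, by have := (hbound x hx).2; omega⟩, hs⟩

theorem exists_equiv_of_map_univ_eq {α β γ : Type*} [Fintype α] [Fintype β] {f : α → γ}
    {g : β → γ} (h : univ.val.map f = univ.val.map g) : ∃ σ : α ≃ β, ∀ a, g (σ a) = f a := by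
  classical
  refine ⟨Equiv.ofFiberEquiv fun c => Fintype.equivOfCardEq ?_, Equiv.ofFiberEquiv_map _⟩
  have := congrArg (Multiset.count c) h
  simpa [Multiset.count_map, Fintype.card_subtype, eq_comm, Finset.card_def] using this

theorem AddCommGroup.exists_addEquiv_pi_zmod_prime_pow (A : Type*) [AddCommGroup A]
    [Finite A] :
    ∃ (ι : Type) (_ : Fintype ι) (p e : ι → ℕ), (∀ i, (p i).Prime) ∧ (∀ i, e i ≠ 0) ∧
      Nonempty (A ≃+ ∀ i, ZMod (p i ^ e i)) := by
  classical
  obtain ⟨ι, _, p, hp, e, ⟨f⟩⟩ := AddCommGroup.equiv_directSum_zmod_of_finite A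
  have : ∀ i : {i // ¬ e i ≠ 0}, Subsingleton (ZMod (p i ^ e i)) := fun i => by
    rw [not_not.1 i.2, pow_zero]; infer_instance
  refine ⟨{i // e i ≠ 0}, inferInstance, fun i => p i, fun i => e i, fun i => hp i, fun i => i.2,
    ⟨f.trans <| (DirectSum.addEquivProd _).trans ?_⟩⟩
  exact ((RingEquiv.piEquivPiSubtypeProd _ _).trans
    (RingEquiv.prodZeroRing _ _).symm).toAddEquiv

def ZMod.piCongr {ι κ : Type*} {f : ι → ℕ} {g : κ → ℕ} (σ : ι ≃ κ)
    (h : ∀ i, g (σ i) = f i) :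
    (∀ i, ZMod (f i)) ≃+* ∀ k, ZMod (g k) :=
  (RingEquiv.piCongrRight fun i => ZMod.ringEquivCongr (h i).symm).trans
    (RingEquiv.piCongrLeft (fun k => ZMod (g k)) σ)

theorem Nat.sum_filter_le_factorization_of_prod_pow_dvd {ι : Type*} [Fintype ι] {p e : ι → ℕ}
    (hp : ∀ i, (p i).Prime) {m : ℕ} (hm : m ≠ 0) (hdvd : ∏ i, p i ^ e i ∣ m) (q : ℕ) :
    ∑ i with p i = q, e i ≤ m.factorization q := by
  classical
  have hfact : (∏ i, p i ^ e i).factorization q = ∑ i with p i = q, e i := by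
    rw [Nat.factorization_prod fun i _ => pow_ne_zero _ (hp i).ne_zero, Finset.sum_apply',
      sum_filter]
    refine sum_congr rfl fun i _ => ?_
    rw [(hp i).factorization_pow, Finsupp.single_apply]
  rw [← hfact]
  exact (Nat.factorization_le_iff_dvd (Finset.prod_ne_zero_iff.2 fun i _ =>
    pow_ne_zero _ (hp i).ne_zero) hm).2 hdvd q

/-- `d p ⊆ {1, …, v_p(m)}` encodes, via `partsOf`, the exponents of the cyclic `p`-power factors
of `d.group`. -/
abbrev PartitionCode (m : ℕ) : Type :=
  ∀ p : m.primeFactors, (Icc 1 (m.factorization p)).powerset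

abbrev PartitionCode.group {m : ℕ} (d : PartitionCode m) : Type :=
  ∀ x : Σ p : m.primeFactors, ((d p).1 : Finset ℕ), ZMod (x.1 ^ partOf (d x.1) x.2)

theorem card_partitionCode (m : ℕ) :
    Nat.card (PartitionCode m) = 2 ^ m.primeFactorsList.length := by
  rw [Nat.card_pi]
  simp only [Nat.card_eq_fintype_card, Fintype.card_coe, card_powerset, Nat.card_Icc,
    Nat.add_sub_cancel]
  rw [univ_eq_attach, prod_attach m.primeFactors (fun p => 2 ^ m.factorization p),
    prod_pow_eq_pow_sum, ← ArithmeticFunction.cardFactors_apply,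
    ArithmeticFunction.cardFactors_eq_sum_factorization]
  rfl

theorem exists_partitionCode_ringEquiv_pi_zmod {m : ℕ} (hm : m ≠ 0) {ι : Type*} [Fintype ι]
    {p e : ι → ℕ} (hp : ∀ i, (p i).Prime) (he : ∀ i, e i ≠ 0) (hdvd : ∏ i, p i ^ e i ∣ m) :
    ∃ d : PartitionCode m, Nonempty ((∀ i, ZMod (p i ^ e i)) ≃+* d.group) := by
  classical
  have hpm (i : ι) : p i ∈ m.primeFactors := Nat.mem_primeFactors.2
    ⟨hp i, (dvd_pow_self _ (he i)).trans ((dvd_prod_of_mem _ (mem_univ i)).trans hdvd), hm⟩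
  let F : ι → m.primeFactors := fun i => ⟨p i, hpm i⟩
  have hsum (q : m.primeFactors) : ∑ j : {i // F i = q}, e j ≤ m.factorization q := by
    refine (Eq.le ?_).trans (Nat.sum_filter_le_factorization_of_prod_pow_dvd hp hm hdvd q)
    exact (sum_subtype _ (by simp [F, Subtype.ext_iff]) _).symm
  have hparts (q : m.primeFactors) := exists_subset_Icc_partsOf_eq
    (univ.val.map fun j : {i // F i = q} => e j) (by simp [Nat.pos_of_ne_zero, he])
  choose s hsIcc hs using hparts
  let d : PartitionCode m := fun q => ⟨s q, mem_powerset.2 <| (hsIcc q).trans <|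
    Icc_subset_Icc_right <| (sum_eq_multiset_sum _ _).symm.le.trans (hsum q)⟩
  have hfiber (q : m.primeFactors) : ∃ σ : {i // F i = q} ≃ (s q : Finset ℕ),
      ∀ j, partOf (s q) (σ j) = e j := by
    refine exists_equiv_of_map_univ_eq (f := fun j : {i // F i = q} => e j)
      (g := fun x : (s q : Finset ℕ) => partOf (s q) x) ?_
    rw [univ_eq_attach, attach_val, ← hs]
    exact (Multiset.attach_map_val' _ _).symm
  choose σ hσ using hfiber
  exact ⟨d, ⟨ZMod.piCongr ((Equiv.sigmaFiberEquiv F).symm.trans (Equiv.sigmaCongrRight σ))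
    fun i => congrArg (p i ^ ·) (hσ (F i) ⟨i, rfl⟩)⟩⟩

theorem exists_partitionCode_addEquiv {m : ℕ} (hm : m ≠ 0) (A : Type*) [AddCommGroup A]
    [Finite A] (hA : Nat.card A ∣ m) : ∃ d : PartitionCode m, Nonempty (A ≃+ d.group) := by
  obtain ⟨ι, _, p, e, hp, he, ⟨f⟩⟩ := AddCommGroup.exists_addEquiv_pi_zmod_prime_pow A
  have hcard : Nat.card A = ∏ i, p i ^ e i := by
    simp [Nat.card_congr f.toEquiv, Nat.card_pi, Nat.card_zmod]
  obtain ⟨d, ⟨g⟩⟩ := exists_partitionCode_ringEquiv_pi_zmod hm hp he (hcard ▸ hA)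
  exact ⟨d, ⟨f.trans g.toAddEquiv⟩⟩

abbrev SubgroupIsoClasses (G : Type*) [Group G] : Type _ :=
  Quot fun H K : Subgroup G => Nonempty (H ≃* K)

theorem card_subgroupIsoClasses_le (G : Type*) [CommGroup G] [Finite G] :
    Nat.card (SubgroupIsoClasses G) ≤ 2 ^ (Nat.card G).primeFactorsList.length := by
  have hcode (H : Subgroup G) :
      ∃ d : PartitionCode (Nat.card G), Nonempty (H ≃* Multiplicative d.group) :=
    (exists_partitionCode_addEquiv Nat.card_pos.ne' (Additive H) H.card_subgroup_dvd_card).imp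
      fun _ ⟨f⟩ => ⟨AddEquiv.toMultiplicativeRight f⟩
  choose code hcode using hcode
  have hinj : Function.Injective fun q : SubgroupIsoClasses G => code q.out := by
    intro q₁ q₂ (h : code q₁.out = code q₂.out)
    rw [← Quot.out_eq q₁, ← Quot.out_eq q₂]
    obtain ⟨f₁⟩ := hcode q₁.out
    obtain ⟨f₂⟩ := hcode q₂.out
    exact Quot.sound ⟨f₁.trans ((h ▸ f₂).symm)⟩
  calc Nat.card (SubgroupIsoClasses G) ≤ Nat.card (PartitionCode (Nat.card G)) :=
        Nat.card_le_card_of_injective _ hinj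
    _ = _ := card_partitionCode _

theorem prime_dvd_card_ker_powMonoidHom_iff {G : Type*} [CommGroup G] [Finite G] {q N : ℕ}
    (hq : q.Prime) (hqG : q ∣ Nat.card G) :
    q ∣ Nat.card (powMonoidHom N : G →* G).ker ↔ q ∣ N := by
  have := Fact.mk hq
  constructor
  · intro hdvd
    obtain ⟨y, hy⟩ := exists_prime_orderOf_dvd_card' q hdvd
    rw [← hy, ← Subgroup.orderOf_coe]
    exact orderOf_dvd_of_pow_eq_one y.2
  · intro hqN
    obtain ⟨x, hx⟩ := exists_prime_orderOf_dvd_card' q hqG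
    have hxker : x ∈ (powMonoidHom N : G →* G).ker := orderOf_dvd_iff_pow_eq_one.1 (hx ▸ hqN)
    rw [← hx, ← Subgroup.orderOf_mk x hxker]
    exact orderOf_dvd_natCard _

theorem primeFactors_card_ker_powMonoidHom_prod {G : Type*} [CommGroup G] [Finite G]
    {S : Finset ℕ} (hS : S ⊆ (Nat.card G).primeFactors) :
    (Nat.card (powMonoidHom (∏ p ∈ S, p) : G →* G).ker).primeFactors = S := by
  ext q
  rw [Nat.mem_primeFactors_of_ne_zero Nat.card_pos.ne']
  constructor
  · rintro ⟨hq, hdvd⟩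
    have hqG := hdvd.trans (Subgroup.card_subgroup_dvd_card _)
    obtain ⟨r, hr, hqr⟩ :=
      (Prime.dvd_finsetProd_iff hq.prime _).1 ((prime_dvd_card_ker_powMonoidHom_iff hq hqG).1 hdvd)
    rwa [(Nat.prime_dvd_prime_iff_eq hq (Nat.prime_of_mem_primeFactors (hS hr))).1 hqr]
  · intro hqS
    have hq := Nat.prime_of_mem_primeFactors (hS hqS)
    exact ⟨hq, (prime_dvd_card_ker_powMonoidHom_iff hq (Nat.dvd_of_mem_primeFactors (hS hqS))).2
      (dvd_prod_of_mem _ hqS)⟩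

theorem two_pow_card_primeFactors_le_card_subgroupIsoClasses (G : Type*) [CommGroup G]
    [Finite G] : 2 ^ (Nat.card G).primeFactors.card ≤ Nat.card (SubgroupIsoClasses G) := by
  let primesOfCard : SubgroupIsoClasses G → Finset ℕ :=
    Quot.lift (fun H => (Nat.card H).primeFactors) fun _ _ ⟨f⟩ => by rw [Nat.card_congr f.toEquiv]
  let torsion (S : (Nat.card G).primeFactors.powerset) : SubgroupIsoClasses G :=
    Quot.mk _ (powMonoidHom (∏ p ∈ S.1, p)).ker
  have hinj : Function.Injective torsion := fun S T h => Subtype.ext <| by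
    simpa only [primesOfCard, torsion, Quot.lift_mk,
      primeFactors_card_ker_powMonoidHom_prod (mem_powerset.1 S.2),
      primeFactors_card_ker_powMonoidHom_prod (mem_powerset.1 T.2)] using congrArg primesOfCard h
  simpa only [Nat.card_eq_fintype_card, Fintype.card_coe, card_powerset] using
    Nat.card_le_card_of_injective torsion hinj

/-- `ω(φ(n))·log 2 ≤ log I(n) ≤ Ω(φ(n))·log 2`, where `I(n)` is the number of
isomorphism classes of subgroups of `(ℤ/nℤ)ˣ`, `ω` counts distinct prime factors
and `Ω` counts prime factors with multiplicity. -/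
theorem log_I_bounds (n : ℕ) [NeZero n] :
    ((Nat.totient n).primeFactors.card : ℝ) * Real.log 2
        ≤ Real.log
            (Nat.card (Quot fun H K : Subgroup (ZMod n)ˣ => Nonempty (H ≃* K))) ∧
      Real.log
          (Nat.card (Quot fun H K : Subgroup (ZMod n)ˣ => Nonempty (H ≃* K)))
        ≤ ((Nat.totient n).primeFactorsList.length : ℝ) * Real.log 2 := by
  have hcard : Nat.card (ZMod n)ˣ = n.totient := by
    rw [Nat.card_eq_fintype_card, ZMod.card_units_eq_totient]
  have lower := two_pow_card_primeFactors_le_card_subgroupIsoClasses (ZMod n)ˣ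
  have upper := card_subgroupIsoClasses_le (ZMod n)ˣ
  have : Nonempty (SubgroupIsoClasses (ZMod n)ˣ) := ⟨Quot.mk _ ⊥⟩
  have hpos : 0 < Nat.card (SubgroupIsoClasses (ZMod n)ˣ) := Nat.card_pos
  rw [hcard] at lower upper
  rw [← Real.log_pow, ← Real.log_pow]
  constructor
  · exact Real.log_le_log (by positivity) (by exact_mod_cast lower)
  · exact Real.log_le_log (by exact_mod_cast hpos) (by exact_mod_cast upper)
end

section
/- Let p be a prime, let α = (α₁ ≥ α₂ ≥ ⋯) and β = (β₁ ≥ β₂ ≥ ⋯) be partitions. Then the abelian p-group ℤ_{p^{α₁}} × ℤ_{p^{α₂}} × ⋯ contains a subgroup isomorphic to ℤ_{p^{β₁}} × ℤ_{p^{β₂}} × ⋯ if and only if β_j ≤ α_j for all j ≥ 1. -/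
open Finset Function

/-- An injective additive hom `ZMod (p^b) →+ ZMod (p^a)` when `b ≤ a`. -/
private lemma zmod_hom_exists (p : ℕ) (hp : p.Prime) {b a : ℕ} (hba : b ≤ a) :
    ∃ f : ZMod (p ^ b) →+ ZMod (p ^ a), Function.Injective f := by
  have hp0 : p ≠ 0 := hp.pos.ne'
  have hpa : p ^ a ≠ 0 := pow_ne_zero _ hp0
  have hmul : p ^ (a - b) * p ^ b = p ^ a := by
    rw [← pow_add]; congr 1; omega
  have hdvd : p ^ (a - b) ∣ p ^ a := ⟨p ^ b, hmul.symm⟩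
  set c : ZMod (p ^ a) := ((p ^ (a - b) : ℕ) : ZMod (p ^ a)) with hc
  have hord : addOrderOf c = p ^ b := by
    rw [hc, ZMod.addOrderOf_coe _ hpa, Nat.gcd_eq_right hdvd, ← hmul,
      Nat.mul_div_cancel_left _ (Nat.pos_of_ne_zero (pow_ne_zero _ hp0))]
  have hcond : (zmultiplesHom (ZMod (p ^ a)) c) ((p ^ b : ℕ) : ℤ) = 0 := by
    have : ((p ^ b : ℕ) : ℤ) • c = (p ^ b : ℕ) • c := natCast_zsmul _ _
    rw [zmultiplesHom_apply, this, ← addOrderOf_dvd_iff_nsmul_eq_zero, hord]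
  refine ⟨ZMod.lift (p ^ b) ⟨zmultiplesHom (ZMod (p ^ a)) c, by exact_mod_cast hcond⟩, ?_⟩
  rw [ZMod.lift_injective]
  intro m hm
  simp only [zmultiplesHom_apply] at hm
  rw [ZMod.intCast_zmod_eq_zero_iff_dvd]
  rw [← addOrderOf_dvd_iff_zsmul_eq_zero, hord] at hm
  exact_mod_cast hm

/-- Counting lemma in one cyclic factor, additive form. -/
private lemma factor_card_add (p : ℕ) (hp : p.Prime) (a k : ℕ) :
    Nat.card {x : ZMod (p ^ a) // p • x = 0 ∧ ∃ y, p ^ k • y = x}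
      = if k < a then p else 1 := by
  have hp0 : p ≠ 0 := hp.pos.ne'
  haveI : NeZero (p ^ a) := ⟨pow_ne_zero _ hp0⟩
  haveI : NeZero p := ⟨hp0⟩
  rcases lt_or_ge k a with h | h
  · rw [if_pos h]
    have ha1 : p * p ^ (a - 1) = p ^ a := by rw [← pow_succ']; congr 1; omega
    have e : ZMod p ≃ {x : ZMod (p ^ a) // p • x = 0 ∧ ∃ y, p ^ k • y = x} := by
      refine Equiv.ofBijective (fun c => ⟨((c.val * p ^ (a - 1) : ℕ) : ZMod (p ^ a)), ?_, ?_⟩)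
        ⟨?_, ?_⟩
      · rw [nsmul_eq_mul, ← Nat.cast_mul, ZMod.natCast_eq_zero_iff]
        exact ⟨c.val, by rw [← ha1]; ring⟩
      · refine ⟨((c.val * p ^ (a - 1 - k) : ℕ) : ZMod (p ^ a)), ?_⟩
        rw [nsmul_eq_mul, ← Nat.cast_mul]
        congr 1
        have : p ^ k * p ^ (a - 1 - k) = p ^ (a - 1) := by rw [← pow_add]; congr 1; omega
        calc p ^ k * (c.val * p ^ (a - 1 - k)) = c.val * (p ^ k * p ^ (a - 1 - k)) := by ring
          _ = c.val * p ^ (a - 1) := by rw [this]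
      · intro c c' hcc
        have h1 : c.val * p ^ (a - 1) < p ^ a := by
          calc c.val * p ^ (a - 1) < p * p ^ (a - 1) :=
                (Nat.mul_lt_mul_right (Nat.pos_of_ne_zero (pow_ne_zero _ hp0))).mpr (ZMod.val_lt c)
            _ = p ^ a := ha1
        have h2 : c'.val * p ^ (a - 1) < p ^ a := by
          calc c'.val * p ^ (a - 1) < p * p ^ (a - 1) :=
                (Nat.mul_lt_mul_right (Nat.pos_of_ne_zero (pow_ne_zero _ hp0))).mpr (ZMod.val_lt c')
            _ = p ^ a := ha1
        have := congrArg ZMod.val (Subtype.ext_iff.mp hcc)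
        rw [ZMod.val_cast_of_lt h1, ZMod.val_cast_of_lt h2] at this
        exact ZMod.val_injective p
          (Nat.eq_of_mul_eq_mul_right (Nat.pos_of_ne_zero (pow_ne_zero _ hp0)) this)
      · rintro ⟨x, hx, -⟩
        have hx' : p ^ a ∣ p * x.val := by
          rw [← ZMod.natCast_eq_zero_iff, Nat.cast_mul, ZMod.natCast_val,
            ZMod.cast_id, ← nsmul_eq_mul]
          exact_mod_cast hx
        have hx'' : p * p ^ (a - 1) ∣ p * x.val := by rw [ha1]; exact hx'
        have hdvd : p ^ (a - 1) ∣ x.val := (mul_dvd_mul_iff_left (hp0 : (p:ℕ) ≠ 0)).mp hx''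
        obtain ⟨d, hd⟩ := hdvd
        have hdp : d < p := by
          have hxlt : x.val < p ^ a := ZMod.val_lt x
          rw [hd, ← ha1, mul_comm p (p ^ (a-1))] at hxlt
          exact lt_of_mul_lt_mul_left hxlt (Nat.zero_le _)
        refine ⟨(d : ZMod p), Subtype.ext ?_⟩
        simp only
        rw [ZMod.val_cast_of_lt hdp]
        rw [mul_comm, ← hd, ZMod.natCast_val, ZMod.cast_id]
    rw [Nat.card_congr e.symm, Nat.card_zmod]
  · rw [if_neg (not_lt.mpr h)]
    have hz : ∀ z : ZMod (p ^ a), p ^ k • z = 0 := by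
      intro z
      have : p ^ k = p ^ a * p ^ (k - a) := by rw [← pow_add]; congr 1; omega
      rw [this, mul_smul, nsmul_eq_mul, ZMod.natCast_self, zero_mul]
    rw [Nat.card_eq_one_iff_unique]
    constructor
    · constructor
      rintro ⟨x, -, y, rfl⟩ ⟨x', -, y', rfl⟩
      simp [hz]
    · exact ⟨⟨0, smul_zero _, 0, smul_zero _⟩⟩

/-- Counting lemma in one cyclic factor, multiplicative form. -/
private lemma factor_card (p : ℕ) (hp : p.Prime) (a k : ℕ) :
    Nat.card {t : Multiplicative (ZMod (p ^ a)) // t ^ p = 1 ∧ ∃ z, z ^ p ^ k = t}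
      = if k < a then p else 1 := by
  rw [← factor_card_add p hp a k]
  refine Nat.card_congr (Equiv.subtypeEquiv Multiplicative.toAdd fun t => ?_)
  constructor
  · rintro ⟨h1, z, rfl⟩
    refine ⟨?_, z.toAdd, by rw [← toAdd_pow]⟩
    have := congrArg Multiplicative.toAdd h1
    rwa [toAdd_pow, toAdd_one] at this
  · rintro ⟨h1, y, hy⟩
    constructor
    · apply Multiplicative.toAdd.injective
      rw [toAdd_pow, toAdd_one, h1]
    · exact ⟨Multiplicative.ofAdd y, Multiplicative.toAdd.injective (by
        rw [toAdd_pow]; simpa using hy)⟩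

/-- Counting lemma in a product of cyclic groups. -/
private lemma pi_card (p : ℕ) (hp : p.Prime) (γ : ℕ → ℕ) (N k : ℕ)
    (hN : ∀ j, N ≤ j → γ j = 0) :
    Nat.card {x : ∀ j : ℕ, Multiplicative (ZMod (p ^ γ j)) //
        x ^ p = 1 ∧ ∃ y, y ^ p ^ k = x}
      = p ^ ((Finset.range N).filter fun j => k < γ j).card := by
  classical
  set Q : ∀ j : ℕ, Multiplicative (ZMod (p ^ γ j)) → Prop :=
    fun j t => t ^ p = 1 ∧ ∃ z, z ^ p ^ k = t with hQ
  have e1 : {x : ∀ j : ℕ, Multiplicative (ZMod (p ^ γ j)) //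
      x ^ p = 1 ∧ ∃ y, y ^ p ^ k = x} ≃ {x : ∀ j : ℕ, Multiplicative (ZMod (p ^ γ j)) //
      ∀ j, Q j (x j)} := by
    refine Equiv.subtypeEquivRight fun x => ?_
    constructor
    · rintro ⟨h1, y, rfl⟩ j
      exact ⟨congr_fun h1 j, y j, rfl⟩
    · intro h
      refine ⟨funext fun j => (h j).1, ?_⟩
      choose z hz using fun j => (h j).2
      exact ⟨z, funext hz⟩
  have e2 := Equiv.subtypePiEquivPi (p := Q)
  rw [Nat.card_congr (e1.trans e2)]
  rw [Nat.card_congr (Equiv.piEquivPiSubtypeProd (fun j => j < N)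
    (fun j => {t // Q j t})), Nat.card_prod]
  have hone : ∀ j : ℕ, ¬ j < N → Nat.card {t // Q j t} = 1 := by
    intro j hj
    rw [hQ]
    simp only
    rw [factor_card p hp _ k, hN j (le_of_not_gt hj), if_neg (Nat.not_lt_zero k)]
  have h2 : Nat.card (∀ j : {j : ℕ // ¬ j < N}, {t // Q j.1 t}) = 1 := by
    haveI hs : ∀ j : {j : ℕ // ¬ j < N}, Subsingleton {t // Q j.1 t} :=
      fun j => (Nat.card_eq_one_iff_unique.mp (hone j.1 j.2)).1
    haveI hn : ∀ j : {j : ℕ // ¬ j < N}, Nonempty {t // Q j.1 t} :=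
      fun j => ⟨⟨1, one_pow p, 1, one_pow _⟩⟩
    rw [Nat.card_eq_one_iff_unique]
    exact ⟨inferInstance, inferInstance⟩
  rw [h2, mul_one]
  rw [Nat.card_congr (Equiv.piCongrLeft (fun j : {j : ℕ // j < N} => {t // Q j.1 t})
    Fin.equivSubtype).symm]
  rw [Nat.card_pi]
  have : ∀ i : Fin N, Nat.card {t // Q (Fin.equivSubtype i).1 t}
      = if k < γ i.1 then p else 1 := by
    intro i
    rw [hQ]
    simp only
    rw [factor_card p hp _ k]
    rfl
  rw [Finset.prod_congr rfl fun i _ => this i]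
  rw [Fin.prod_univ_eq_prod_range (fun i => if k < γ i then p else 1) N]
  rw [← Finset.prod_filter, Finset.prod_const]

/-- Combinatorial step. -/
private lemma conj_le (α β : ℕ → ℕ) (hα : Antitone α) (hβ : Antitone β) (N : ℕ)
    (hNβ : ∀ j, N ≤ j → β j = 0)
    (key : ∀ k, ((Finset.range N).filter fun j => k < β j).card
      ≤ ((Finset.range N).filter fun j => k < α j).card) :
    ∀ j, β j ≤ α j := by
  intro j
  by_contra hc
  push_neg at hc
  have hjN : j < N := by
    by_contra hj
    rw [hNβ j (le_of_not_gt hj)] at hc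
    omega
  have h1 : Finset.range (j + 1) ⊆ (Finset.range N).filter fun i => α j < β i := by
    intro i hi
    rw [Finset.mem_range] at hi
    rw [Finset.mem_filter, Finset.mem_range]
    exact ⟨by omega, lt_of_lt_of_le hc (hβ (by omega))⟩
  have h2 : ((Finset.range N).filter fun i => α j < α i) ⊆ Finset.range j := by
    intro i hi
    rw [Finset.mem_filter] at hi
    rw [Finset.mem_range]
    by_contra hij
    exact absurd (hα (le_of_not_gt hij)) (not_le.mpr hi.2)
  have := key (α j)
  have hb := Finset.card_le_card h1
  have ha := Finset.card_le_card h2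
  rw [Finset.card_range] at hb
  rw [Finset.card_range] at ha
  omega

/-- Let `p` be prime and `α, β : ℕ → ℕ` be partitions (nonincreasing, finitely supported).
Then `∏ⱼ ℤ_{p^{αⱼ}}` contains a subgroup isomorphic to `∏ⱼ ℤ_{p^{βⱼ}}` if and only if
`βⱼ ≤ αⱼ` for all `j`. -/
theorem subgroup_iff_subpartition (p : ℕ) (hp : p.Prime) (α β : ℕ → ℕ)
    (hα : Antitone α) (hβ : Antitone β)
    (hα0 : ∃ N, ∀ j, N ≤ j → α j = 0) (hβ0 : ∃ N, ∀ j, N ≤ j → β j = 0) :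
    (∃ H : Subgroup (∀ j : ℕ, Multiplicative (ZMod (p ^ α j))),
        Nonempty (H ≃* ∀ j : ℕ, Multiplicative (ZMod (p ^ β j))))
      ↔ ∀ j, β j ≤ α j := by
  constructor
  · rintro ⟨H, ⟨e⟩⟩
    obtain ⟨Nα, hNα⟩ := hα0
    obtain ⟨Nβ, hNβ⟩ := hβ0
    set N := max Nα Nβ with hN
    have hNα' : ∀ j, N ≤ j → α j = 0 := fun j hj => hNα j (le_trans (le_max_left _ _) hj)
    have hNβ' : ∀ j, N ≤ j → β j = 0 := fun j hj => hNβ j (le_trans (le_max_right _ _) hj)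
    refine conj_le α β hα hβ N hNβ' fun k => ?_
    have hcard : Nat.card {x : ∀ j : ℕ, Multiplicative (ZMod (p ^ β j)) //
          x ^ p = 1 ∧ ∃ y, y ^ p ^ k = x}
        ≤ Nat.card {x : ∀ j : ℕ, Multiplicative (ZMod (p ^ α j)) //
          x ^ p = 1 ∧ ∃ y, y ^ p ^ k = x} := by
      haveI : Finite {x : ∀ j : ℕ, Multiplicative (ZMod (p ^ α j)) //
          x ^ p = 1 ∧ ∃ y, y ^ p ^ k = x} := by
        apply Nat.finite_of_card_ne_zero
        rw [pi_card p hp α N k hNα']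
        exact pow_ne_zero _ hp.pos.ne'
      set φ : (∀ j : ℕ, Multiplicative (ZMod (p ^ β j)))
          →* (∀ j : ℕ, Multiplicative (ZMod (p ^ α j))) :=
        H.subtype.comp e.symm.toMonoidHom with hφ
      have hφinj : Function.Injective φ :=
        H.subtype_injective.comp e.symm.injective
      refine Nat.card_le_card_of_injective
        (fun s => ⟨φ s.1, ?_, ?_⟩) ?_
      · rw [← map_pow, s.2.1, map_one]
      · obtain ⟨y, hy⟩ := s.2.2
        exact ⟨φ y, by rw [← map_pow, hy]⟩
      · rintro ⟨x, hx⟩ ⟨y, hy⟩ hst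
        simp only [Subtype.mk.injEq] at hst ⊢
        exact hφinj hst
    rw [pi_card p hp α N k hNα', pi_card p hp β N k hNβ'] at hcard
    exact (Nat.pow_le_pow_iff_right hp.one_lt).mp hcard
  · intro hle
    choose f hf using fun j => zmod_hom_exists p hp (hle j)
    set φ : (∀ j : ℕ, Multiplicative (ZMod (p ^ β j)))
        →* (∀ j : ℕ, Multiplicative (ZMod (p ^ α j))) :=
      { toFun := fun x j => Multiplicative.ofAdd (f j (x j).toAdd)
        map_one' := by funext j; simp
        map_mul' := fun x y => by funext j; simp [map_add] } with hφ
    have hφinj : Function.Injective φ := by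
      intro x y h
      funext j
      have := congr_fun h j
      simp only [hφ, MonoidHom.coe_mk, OneHom.coe_mk] at this
      exact Multiplicative.toAdd.injective (hf j (Multiplicative.ofAdd.injective this))
    exact ⟨φ.range, ⟨(MonoidHom.ofInjective hφinj).symm⟩⟩
end

section
/- Let h be a positive even integer, R a commutative ℚ-algebra, and r₀,...,r_ℓ ∈ R. Define Φ_h on monomials x_{m₁}⋯x_{m_h} (in variables x₀,...,x_ℓ) by Φ_h(x_{m₁}⋯x_{m_h}) = (1/h!)·∑_{σ ∈ Σ_h} z_{m_{σ(1)} m_{σ(2)}} ⋯ z_{m_{σ(h-1)} m_{σ(h)}} (in variables z_{ij}, 0 ≤ i,j ≤ ℓ), extended R-linearly to homogeneous polynomials of degree h. Then Φ_h((r₀x₀ + ⋯ + r_ℓ x_ℓ)^h) = (∑_{0 ≤ i,j ≤ ℓ} r_i r_j z_{ij})^{h/2}. -/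
open MvPolynomial

/-- Let `h` be a positive even integer, `R` a commutative `ℚ`-algebra, and
`r₀, …, r_ℓ ∈ R`. Let `Φ` be an `R`-linear map from polynomials in `x₀, …, x_ℓ` to
polynomials in the variables `z_{ij}` (`0 ≤ i, j ≤ ℓ`) such that on each monomial
`x_{m₁} ⋯ x_{m_h}` of degree `h`,
`Φ(x_{m₁} ⋯ x_{m_h}) = (1/h!) ∑_{σ ∈ Σ_h} z_{m_{σ(1)} m_{σ(2)}} ⋯ z_{m_{σ(h-1)} m_{σ(h)}}`.
Then `Φ((r₀x₀ + ⋯ + r_ℓ x_ℓ)^h) = (∑_{i,j} r_i r_j z_{ij})^{h/2}`. -/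
theorem Phi_of_pow_linear (h ℓ : ℕ) (hh : 0 < h) (he : h % 2 = 0)
    (R : Type*) [CommRing R] [Algebra ℚ R] (r : Fin (ℓ + 1) → R)
    (Φ : MvPolynomial (Fin (ℓ + 1)) R →ₗ[R] MvPolynomial (Fin (ℓ + 1) × Fin (ℓ + 1)) R)
    (hΦ : ∀ m : Fin h → Fin (ℓ + 1),
      Φ (∏ i : Fin h, X (m i))
        = ((h.factorial : ℚ))⁻¹ •
            ∑ σ : Equiv.Perm (Fin h),
              ∏ i : Fin (h / 2),
                X (m (σ ⟨2 * (i : ℕ), by have := i.isLt; omega⟩),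
                   m (σ ⟨2 * (i : ℕ) + 1, by have := i.isLt; omega⟩))) :
    Φ ((∑ i : Fin (ℓ + 1), C (r i) * X i) ^ h)
      = (∑ i : Fin (ℓ + 1), ∑ j : Fin (ℓ + 1), C (r i) * C (r j) * X (i, j)) ^ (h / 2) := by
  classical
  -- the pairing equivalence
  let e : Fin (h / 2) × Fin 2 ≃ Fin h :=
  { toFun := fun p => ⟨2 * p.1 + p.2, by have := p.1.isLt; have := p.2.isLt; omega⟩
    invFun := fun i => (⟨(i : ℕ) / 2, by have := i.isLt; omega⟩, ⟨(i : ℕ) % 2, by omega⟩)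
    left_inv := fun p => by
      have h2 := p.2.isLt
      refine Prod.ext (Fin.ext ?_) (Fin.ext ?_) <;> simp <;> omega
    right_inv := fun i => by
      refine Fin.ext ?_
      simp; omega }
  -- split a product over Fin h into pairs
  have prod_split : ∀ (f : Fin h → R),
      (∏ i, f i) = ∏ k : Fin (h / 2),
        f ⟨2 * (k : ℕ), by have := k.isLt; omega⟩ *
        f ⟨2 * (k : ℕ) + 1, by have := k.isLt; omega⟩ := by
    intro f
    rw [← Equiv.prod_comp e f, Fintype.prod_prod_type]
    refine Finset.prod_congr rfl fun k _ => ?_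
    rw [Fin.prod_univ_two]
    congr 1 <;> · congr 1; ext; simp [e]
  -- expand the power on the left
  rw [Fintype.sum_pow, map_sum]
  have hterm : ∀ m : Fin h → Fin (ℓ + 1),
      Φ (∏ i, (C (r (m i)) * X (m i))) = (∏ i, r (m i)) • Φ (∏ i, X (m i)) := by
    intro m
    rw [Finset.prod_mul_distrib, ← map_prod, ← smul_eq_C_mul, map_smul]
  rw [Finset.sum_congr rfl fun m _ => hterm m]
  simp only [hΦ]
  -- pull out the rational factor and swap sums
  have hcomm : ∀ (c : R) (x : MvPolynomial (Fin (ℓ + 1) × Fin (ℓ + 1)) R),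
      c • (((h.factorial : ℚ))⁻¹ • x) = ((h.factorial : ℚ))⁻¹ • (c • x) := fun c x =>
    smul_comm _ _ _
  simp only [hcomm, Finset.smul_sum]
  rw [Finset.sum_comm]
  -- for each permutation the inner sum is the same
  have key : ∀ σ : Equiv.Perm (Fin h),
      (∑ m : Fin h → Fin (ℓ + 1), ((h.factorial : ℚ))⁻¹ • (∏ i, r (m i)) •
        (∏ k : Fin (h / 2),
          X (m (σ ⟨2 * (k : ℕ), by have := k.isLt; omega⟩),
             m (σ ⟨2 * (k : ℕ) + 1, by have := k.isLt; omega⟩)) :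
          MvPolynomial (Fin (ℓ + 1) × Fin (ℓ + 1)) R))
      = ((h.factorial : ℚ))⁻¹ • ∑ m : Fin h → Fin (ℓ + 1), (∏ i, r (m i)) •
          ∏ k : Fin (h / 2),
            X (m ⟨2 * (k : ℕ), by have := k.isLt; omega⟩,
               m ⟨2 * (k : ℕ) + 1, by have := k.isLt; omega⟩) := by
    intro σ
    rw [← Finset.smul_sum]
    congr 1
    rw [← Equiv.sum_comp (Equiv.arrowCongr σ.symm (Equiv.refl (Fin (ℓ + 1))))
      (fun m => (∏ i, r (m i)) • ∏ k : Fin (h / 2),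
        X (m ⟨2 * (k : ℕ), by have := k.isLt; omega⟩,
           m ⟨2 * (k : ℕ) + 1, by have := k.isLt; omega⟩))]
    refine Finset.sum_congr rfl fun m _ => ?_
    simp only [Equiv.arrowCongr_apply, Equiv.refl_symm, Equiv.coe_refl, Equiv.symm_symm,
      Function.comp_apply, id_eq]
    congr 1
    exact (Equiv.prod_comp σ (fun i => r (m i))).symm
  rw [Finset.sum_congr rfl fun σ _ => key σ, Finset.sum_const, Finset.card_univ,
    Fintype.card_perm, Fintype.card_fin, ← Nat.cast_smul_eq_nsmul ℚ, smul_smul,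
    mul_inv_cancel₀ (Nat.cast_ne_zero.mpr h.factorial_ne_zero), one_smul]
  -- expand the right-hand side
  rw [← Fintype.sum_prod_type', Fintype.sum_pow]
  have hterm' : ∀ p : Fin (h / 2) → Fin (ℓ + 1) × Fin (ℓ + 1),
      (∏ k, (C (r (p k).1) * C (r (p k).2) * X (p k)))
        = (∏ k, r (p k).1 * r (p k).2) • ∏ k, (X (p k) :
            MvPolynomial (Fin (ℓ + 1) × Fin (ℓ + 1)) R) := by
    intro p
    simp only [← C_mul]
    rw [Finset.prod_mul_distrib, ← map_prod, ← smul_eq_C_mul]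
  rw [Finset.sum_congr rfl fun p _ => hterm' p]
  -- the final reindexing
  have d1 : ∀ x : ℕ, 2 * x / 2 = x := fun x => by omega
  have d2 : ∀ x : ℕ, (2 * x + 1) / 2 = x := fun x => by omega
  have m1 : ∀ x : ℕ, 2 * x % 2 = 0 := fun x => by omega
  have m2 : ∀ x : ℕ, ¬((2 * x + 1) % 2 = 0) := fun x => by omega
  refine Finset.sum_nbij'
    (i := fun m k => (m ⟨2 * (k : ℕ), by have := k.isLt; omega⟩,
                      m ⟨2 * (k : ℕ) + 1, by have := k.isLt; omega⟩))
    (j := fun p i => if (i : ℕ) % 2 = 0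
      then (p ⟨(i : ℕ) / 2, by have := i.isLt; omega⟩).1
      else (p ⟨(i : ℕ) / 2, by have := i.isLt; omega⟩).2)
    (fun _ _ => Finset.mem_univ _) (fun _ _ => Finset.mem_univ _) ?_ ?_ ?_
  · intro m _
    funext x
    by_cases hx : (x : ℕ) % 2 = 0
    · simp only [hx, if_true]
      exact congrArg m (Fin.ext (by simp; omega))
    · simp only [hx, if_false]
      exact congrArg m (Fin.ext (by simp; omega))
  · intro p _
    funext k
    refine Prod.ext ?_ ?_ <;> simp [d1, d2, m1, m2]
  · intro m _
    congr 1
    exact prod_split (fun i => r (m i))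
end
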